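/- Let t ≥ 2 and let Y be a one-sided ladder with no lower inside corners and upper inside corners (c_1,d_1),…,(c_k,d_k) (conventions (c_0,d_0)=(1,n), (c_{k+1},d_{k+1})=(m,1)), and assume Y contains at least one t×t minor. Set j_1 = max{j : c_j < t} and j_2 = min{j : d_j < t}. Then j_1 < j_2; the set Y' = {(i,j) ∈ Y : i ≤ c_{j_2} and j ≤ d_{j_1}} is a one-sided t-connected ladder; the set Z = Y ∖ Y' contains no t×t minor of Y; and R_t(Y) is isomorphic as a k-algebra to the polynomial ring over R_t(Y') in the variables indexed by Z. -/

import Mathlib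

set_option maxHeartbeats 1000000
set_option synthInstance.maxHeartbeats 1000000

open CategoryTheory

namespace LadderDet

/-- The position `p` lies in the `m × n` grid `{1,…,m} × {1,…,n}`. -/
def InGrid (m n : ℕ) (p : ℕ × ℕ) : Prop :=
  1 ≤ p.1 ∧ p.1 ≤ m ∧ 1 ≤ p.2 ∧ p.2 ≤ n

/-- `Y` is a ladder in the `m × n` grid. -/
def IsLadder (m n : ℕ) (Y : Set (ℕ × ℕ)) : Prop :=
  (∀ p ∈ Y, InGrid m n p) ∧
  ∀ i j p q : ℕ, (i, j) ∈ Y → (p, q) ∈ Y → i ≤ p → j ≤ q → (i, q) ∈ Y ∧ (p, j) ∈ Y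

/-- A ladder together with the standard nontriviality assumptions:
`(1,n), (m,1) ∈ Y` and every row and every column of the grid meets `Y`. -/
def StdLadder (m n : ℕ) (Y : Set (ℕ × ℕ)) : Prop :=
  IsLadder m n Y ∧ (1, n) ∈ Y ∧ (m, 1) ∈ Y ∧
  (∀ i, 1 ≤ i → i ≤ m → ∃ j, (i, j) ∈ Y) ∧
  (∀ j, 1 ≤ j → j ≤ n → ∃ i, (i, j) ∈ Y)

/-- Two positions differ by exactly `1` in exactly one coordinate. -/
def AdjStep (p q : ℕ × ℕ) : Prop :=
  (p.1 = q.1 ∧ (p.2 + 1 = q.2 ∨ q.2 + 1 = p.2)) ∨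
  (p.2 = q.2 ∧ (p.1 + 1 = q.1 ∨ q.1 + 1 = p.1))

/-- There is a path in `Y` from `p` to `q`. -/
def HasPath (Y : Set (ℕ × ℕ)) (p q : ℕ × ℕ) : Prop :=
  p ∈ Y ∧ q ∈ Y ∧
    Relation.ReflTransGen (fun a b => a ∈ Y ∧ b ∈ Y ∧ AdjStep a b) p q

/-- `Y` is path-connected. -/
def PathConnected (Y : Set (ℕ × ℕ)) : Prop :=
  ∀ p ∈ Y, ∀ q ∈ Y, HasPath Y p q

/-- `M` is (the set of entries of) a `t × t` minor of `Y`. -/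
def IsMinor (t : ℕ) (Y : Set (ℕ × ℕ)) (M : Set (ℕ × ℕ)) : Prop :=
  ∃ r c : Fin t → ℕ, StrictMono r ∧ StrictMono c ∧
    (∀ u v, (r u, c v) ∈ Y) ∧ M = {p | ∃ u v, p = (r u, c v)}

/-- `Y` is `t`-disconnected. -/
def TDisconnected (m n t : ℕ) (Y : Set (ℕ × ℕ)) : Prop :=
  ∃ Z₁ Z₂ : Set (ℕ × ℕ), Z₁.Nonempty ∧ Z₂.Nonempty ∧
    IsLadder m n Z₁ ∧ IsLadder m n Z₂ ∧ Z₁ ∩ Z₂ = ∅ ∧ Z₁ ∪ Z₂ = Y ∧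
    ∀ M, IsMinor t Y M → M ⊆ Z₁ ∨ M ⊆ Z₂

/-- `Y` is `t`-connected. -/
def TConnected (m n t : ℕ) (Y : Set (ℕ × ℕ)) : Prop := ¬ TDisconnected m n t Y

/-- `p` is a lower inside corner of `Y`. -/
def IsLowerCorner (Y : Set (ℕ × ℕ)) (p : ℕ × ℕ) : Prop :=
  p ∈ Y ∧ (p.1 - 1, p.2) ∈ Y ∧ (p.1, p.2 - 1) ∈ Y ∧ (p.1 - 1, p.2 - 1) ∉ Y

/-- `p` is an upper inside corner of `Y`. -/
def IsUpperCorner (Y : Set (ℕ × ℕ)) (p : ℕ × ℕ) : Prop :=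
  p ∈ Y ∧ (p.1 + 1, p.2) ∈ Y ∧ (p.1, p.2 + 1) ∈ Y ∧ (p.1 + 1, p.2 + 1) ∉ Y

/-- `Y` is one-sided: path-connected and with no lower or no upper inside corners. -/
def OneSided (Y : Set (ℕ × ℕ)) : Prop :=
  PathConnected Y ∧
  ((∀ p, ¬ IsLowerCorner Y p) ∨ (∀ p, ¬ IsUpperCorner Y p))

/-- `Y` is two-sided: path-connected with at least one lower and one upper inside corner. -/
def TwoSided (Y : Set (ℕ × ℕ)) : Prop :=
  PathConnected Y ∧ (∃ p, IsLowerCorner Y p) ∧ (∃ p, IsUpperCorner Y p)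

section Algebra

variable (k : Type) [Field k]

/-- The `t × t` minor of the generic matrix determined by rows `r` and columns `c`,
as an element of the polynomial ring `k[Y]`. -/
noncomputable def minorPoly {t : ℕ} {Y : Set (ℕ × ℕ)} (r c : Fin t → ℕ)
    (h : ∀ u v, (r u, c v) ∈ Y) : MvPolynomial Y k :=
  (Matrix.of fun u v : Fin t =>
    (MvPolynomial.X ⟨(r u, c v), h u v⟩ : MvPolynomial Y k)).det

/-- The ideal `I_t(Y) ⊆ k[Y]` generated by all `t × t` minors of `X` lying in `Y`. -/
noncomputable def minorIdeal (t : ℕ) (Y : Set (ℕ × ℕ)) : Ideal (MvPolynomial Y k) :=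
  Ideal.span {f | ∃ (r c : Fin t → ℕ) (_ : StrictMono r) (_ : StrictMono c)
    (h : ∀ u v, (r u, c v) ∈ Y), f = minorPoly k r c h}

/-- The ladder determinantal ring `R_t(Y) = k[Y]/I_t(Y)`. -/
abbrev LadderRing (t : ℕ) (Y : Set (ℕ × ℕ)) : Type :=
  MvPolynomial Y k ⧸ minorIdeal k t Y

/-- The residue `x_{ij}` of the variable `X_{ij}` in `R_t(Y)`. -/
noncomputable def xres (t : ℕ) {Y : Set (ℕ × ℕ)} (p : ℕ × ℕ) (hp : p ∈ Y) :
    LadderRing k t Y :=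
  Ideal.Quotient.mk (minorIdeal k t Y) (MvPolynomial.X ⟨p, hp⟩)

/-- The ideal of `R_2(Y)` generated by the residues of the variables in row `r`
(an ideal of type `𝔮`). -/
noncomputable def rowIdeal (Y : Set (ℕ × ℕ)) (r : ℕ) : Ideal (LadderRing k 2 Y) :=
  Ideal.span {z | ∃ q, ∃ h : (r, q) ∈ Y, z = xres k 2 (r, q) h}

/-- The ideal of `R_2(Y)` generated by the residues of the variables in column `b`
(an ideal of type `𝔮'`). -/
noncomputable def colIdeal (Y : Set (ℕ × ℕ)) (b : ℕ) : Ideal (LadderRing k 2 Y) :=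
  Ideal.span {z | ∃ p, ∃ h : (p, b) ∈ Y, z = xres k 2 (p, b) h}

/-- The ideal `𝔭` of `R_2(Y)` generated by the residues of the variables weakly
northwest of the position `(c, d)`. -/
noncomputable def cornerIdeal (Y : Set (ℕ × ℕ)) (c d : ℕ) : Ideal (LadderRing k 2 Y) :=
  Ideal.span {z | ∃ p q, ∃ h : (p, q) ∈ Y, p ≤ c ∧ q ≤ d ∧ z = xres k 2 (p, q) h}

end Algebra

/-- An ideal of `k[Y]` is a monomial ideal if it is generated by monomials. -/
def IsMonomialIdeal {k : Type} [Field k] {Y : Set (ℕ × ℕ)}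
    (M : Ideal (MvPolynomial Y k)) : Prop :=
  ∃ S : Set (Y →₀ ℕ), M = Ideal.span ((fun d => MvPolynomial.monomial d (1 : k)) '' S)

/-- A finitely generated module `C` over a commutative ring `R` is semidualizing if
the natural homothety map `R → Hom_R(C, C)` is bijective and `Ext^i_R(C, C) = 0` for
all `i ≥ 1`. -/
def IsSemidualizing {R : Type} [CommRing R] (C : ModuleCat.{0} R) : Prop :=
  Module.Finite R C ∧
  Function.Bijective (LinearMap.lsmul R C) ∧
  ∀ i : ℕ, 1 ≤ i →
    Subsingleton (((Ext R (ModuleCat.{0} R) i).obj (Opposite.op C)).obj C)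

/-- `C` has finite injective dimension: for some `n`, `Ext^i_R(M, C) = 0` for all
modules `M` and all `i > n`. -/
def HasFiniteInjDim {R : Type} [CommRing R] (C : ModuleCat.{0} R) : Prop :=
  ∃ n : ℕ, ∀ i : ℕ, n < i → ∀ M : ModuleCat.{0} R,
    Subsingleton (((Ext R (ModuleCat.{0} R) i).obj (Opposite.op M)).obj C)


/-!
Path-connectedness and the absence of lower inside corners force `Y` to be a staircase: with
every position it contains all positions weakly north-west of it, down to `(1, 1)`. In a
staircase a grid position `(i, j)` is missing exactly when some upper inside corner `(c, d)`
has `c < i` and `d < j`.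

The south-east entry `(i, j)` of a `t × t` minor of `Y` has `i, j ≥ t`, so comparing it with
the corners of index `j₁` and `j₂` gives `i ≤ c_{j₂}` and `j ≤ d_{j₁}`: all minors of `Y` lie
in `Y'`, and the variables of `Z` stay free in `R_t(Y)`. Two adjacent positions `p, q` of `Y'`
lie in the `t × t` square ending at `s = p ⊔ q ⊔ (t, t)`. Corners of index at most `j₁` or at
least `j₂` are not strictly north-west of `s` because `s ≤ (c_{j₂}, d_{j₁})`; those in between
have both coordinates `≥ t`, so lying strictly north-west of `s` would put them strictly
north-west of `p ⊔ q ∈ Y`. Hence `s ∈ Y'`, the square lies in `Y'`, and `t`-connectedness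
follows along paths.
-/

lemma AdjStep.le_or_le {p q : ℕ × ℕ} (h : AdjStep p q) : p ≤ q ∨ q ≤ p := by
  simp only [AdjStep, Prod.le_def] at h ⊢
  omega

lemma AdjStep.symm {p q : ℕ × ℕ} (h : AdjStep p q) : AdjStep q p := by
  unfold AdjStep at *
  omega

def IsStaircase (S : Set (ℕ × ℕ)) : Prop :=
  ∀ p ∈ S, (1, 1) ≤ p ∧ Set.Icc (1, 1) p ⊆ S

namespace IsStaircase

variable {S : Set (ℕ × ℕ)} (hS : IsStaircase S)
include hS

lemma one_le_fst {p : ℕ × ℕ} (hp : p ∈ S) : 1 ≤ p.1 := (hS p hp).1.1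

lemma one_le_snd {p : ℕ × ℕ} (hp : p ∈ S) : 1 ≤ p.2 := (hS p hp).1.2

lemma mem_of_le {p : ℕ × ℕ} (hp : p ∈ S) {a b : ℕ} (ha : 1 ≤ a) (hb : 1 ≤ b) (hap : a ≤ p.1)
    (hbp : b ≤ p.2) : (a, b) ∈ S :=
  (hS p hp).2 ⟨⟨ha, hb⟩, ⟨hap, hbp⟩⟩

lemma inter_Iic (r : ℕ × ℕ) : IsStaircase (S ∩ Set.Iic r) :=
  fun p hp => ⟨(hS p hp.1).1, fun _ hq => ⟨(hS p hp.1).2 hq, hq.2.trans hp.2⟩⟩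

lemma not_isLowerCorner (p : ℕ × ℕ) : ¬ IsLowerCorner S p := by
  rintro ⟨hp, hleft, hdown, hdiag⟩
  have := hS.one_le_fst hleft
  have := hS.one_le_snd hdown
  exact hdiag (hS.mem_of_le hp (by omega) (by omega) (by omega) (by omega))

lemma le_or_le_of_isUpperCorner {e p : ℕ × ℕ} (he : IsUpperCorner S e) (hp : p ∈ S) :
    p.1 ≤ e.1 ∨ p.2 ≤ e.2 := by
  by_contra! h
  exact he.2.2.2 (hS.mem_of_le hp (by omega) (by omega) (by omega) (by omega))

lemma reflTransGen_one_one {p : ℕ × ℕ} (hp : p ∈ S) :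
    Relation.ReflTransGen (fun a b => a ∈ S ∧ b ∈ S ∧ AdjStep a b) (1, 1) p := by
  obtain ⟨i, j⟩ := p
  have hi := hS.one_le_fst hp
  have hj := hS.one_le_snd hp
  induction h : i + j generalizing i j with
  | zero => simp only at hi hj; omega
  | succ k ih =>
    simp only at hi hj
    by_cases hj2 : 2 ≤ j
    · have hq : (i, j - 1) ∈ S := hS.mem_of_le hp hi (by omega) le_rfl (by omega)
      exact (ih i (j - 1) hq hi (by omega) (by omega)).tail
        ⟨hq, hp, Or.inl ⟨rfl, Or.inl (by omega)⟩⟩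
    by_cases hi2 : 2 ≤ i
    · have hq : (i - 1, j) ∈ S := hS.mem_of_le hp (by omega) hj (by omega) le_rfl
      exact (ih (i - 1) j hq (by omega) hj (by omega)).tail
        ⟨hq, hp, Or.inr ⟨rfl, Or.inl (by omega)⟩⟩
    obtain ⟨rfl, rfl⟩ : i = 1 ∧ j = 1 := by omega
    rfl

lemma pathConnected : PathConnected S := by
  intro p hp q hq
  have : Std.Symm (fun a b => a ∈ S ∧ b ∈ S ∧ AdjStep a b) :=
    ⟨fun _ _ h => ⟨h.2.1, h.1, h.2.2.symm⟩⟩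
  exact ⟨hp, hq, (symm (hS.reflTransGen_one_one hp)).trans (hS.reflTransGen_one_one hq)⟩

lemma exists_isUpperCorner {i j : ℕ} (hj : (1, j) ∈ S) (hi : (i, 1) ∈ S) (hij : (i, j) ∉ S) :
    ∃ e, IsUpperCorner S e ∧ e.1 < i ∧ e.2 < j := by
  classical
  -- the corner is `(a, b)`: `a` is the last row of `S` in column `j`, `b` the last column of
  -- `S` in row `a + 1`
  set a := Nat.findGreatest (fun a => (a, j) ∈ S) i
  have ha : (a, j) ∈ S :=
    Nat.findGreatest_spec (P := fun a => (a, j) ∈ S) (hS.one_le_fst hi) hj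
  have hai : a < i := lt_of_le_of_ne (Nat.findGreatest_le i) fun h => hij (h ▸ ha)
  have ha' : (a + 1, j) ∉ S := Nat.findGreatest_is_greatest (lt_add_one a) hai
  set b := Nat.findGreatest (fun b => (a + 1, b) ∈ S) j
  have hb : (a + 1, b) ∈ S := Nat.findGreatest_spec (P := fun b => (a + 1, b) ∈ S)
    (hS.one_le_snd hj) (hS.mem_of_le hi (by omega) le_rfl hai le_rfl)
  have hbj : b < j := lt_of_le_of_ne (Nat.findGreatest_le j) fun h => ha' (h ▸ hb)
  have hb' : (a + 1, b + 1) ∉ S := Nat.findGreatest_is_greatest (lt_add_one b) hbj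
  have ha1 := hS.one_le_fst ha
  have hb1 := hS.one_le_snd hb
  exact ⟨(a, b), ⟨hS.mem_of_le ha ha1 hb1 le_rfl hbj.le, hb,
    hS.mem_of_le ha ha1 (by omega) le_rfl hbj, hb'⟩, hai, hbj⟩

lemma exists_isMinor_superset_Icc {t : ℕ} {s : ℕ × ℕ} (hs : s ∈ S) (hts : (t, t) ≤ s) :
    ∃ M, IsMinor t S M ∧ Set.Icc (s.1 + 1 - t, s.2 + 1 - t) s ⊆ M := by
  obtain ⟨ht1, ht2⟩ := hts
  have := hS.one_le_fst hs
  have := hS.one_le_snd hs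
  refine ⟨_, ⟨fun u => s.1 + 1 - t + u, fun v => s.2 + 1 - t + v,
    fun u v h => by simp only [Fin.lt_def] at h ⊢; omega,
    fun u v h => by simp only [Fin.lt_def] at h ⊢; omega,
    fun u v => ?_, rfl⟩, ?_⟩
  · have := u.isLt
    have := v.isLt
    exact hS.mem_of_le hs (by dsimp only; omega) (by dsimp only; omega) (by dsimp only; omega)
      (by dsimp only; omega)
  · rintro p ⟨⟨h1, h2⟩, h3, h4⟩
    exact ⟨⟨p.1 - (s.1 + 1 - t), by omega⟩, ⟨p.2 - (s.2 + 1 - t), by omega⟩, by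
      ext <;> simp only <;> omega⟩

end IsStaircase

lemma mem_of_not_isLowerCorner {Y : Set (ℕ × ℕ)} {a b : ℕ} (h : ¬ IsLowerCorner Y (a + 1, b + 1))
    (h1 : (a + 1, b + 1) ∈ Y) (h2 : (a, b + 1) ∈ Y) (h3 : (a + 1, b) ∈ Y) : (a, b) ∈ Y := by
  by_contra h4
  exact h ⟨h1, h2, h3, h4⟩

namespace StdLadder

variable {m n : ℕ} {Y : Set (ℕ × ℕ)}

lemma mem_of_mem_row (hY : StdLadder m n Y) {x b y j : ℕ} (hb : (x, b) ∈ Y) (hy : (x, y) ∈ Y)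
    (hbj : b ≤ j) (hjy : j ≤ y) : (x, j) ∈ Y := by
  obtain ⟨z, hz⟩ := hY.2.2.2.2 j ((hY.1.1 _ hb).2.2.1.trans hbj) (hjy.trans (hY.1.1 _ hy).2.2.2)
  rcases le_total z x with hzx | hxz
  · exact (hY.1.2 z j x y hz hy hzx hjy).2
  · exact (hY.1.2 x b z j hb hz hxz hbj).1

lemma mem_of_mem_col (hY : StdLadder m n Y) {x a y i : ℕ} (ha : (a, x) ∈ Y) (hy : (y, x) ∈ Y)
    (hai : a ≤ i) (hiy : i ≤ y) : (i, x) ∈ Y := by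
  obtain ⟨w, hw⟩ := hY.2.2.2.1 i ((hY.1.1 _ ha).1.trans hai) (hiy.trans (hY.1.1 _ hy).2.1)
  rcases le_total w x with hwx | hxw
  · exact (hY.1.2 i w y x hw hy hiy hwx).1
  · exact (hY.1.2 a x i w ha hw hai hxw).2

variable (hnolow : ∀ p, ¬ IsLowerCorner Y p)
include hnolow

lemma mem_of_mem_succ_row (hY : StdLadder m n Y) {x b y : ℕ} (hb : (x + 1, b) ∈ Y)
    (hy : (x + 1, y) ∈ Y) (hxy : (x, y) ∈ Y) (hby : b ≤ y) : (x, b) ∈ Y := by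
  induction y, hby using Nat.le_induction with
  | base => exact hxy
  | succ y hby ih =>
    have hy' : (x + 1, y) ∈ Y := hY.mem_of_mem_row hb hy hby (by omega)
    exact ih hy' (mem_of_not_isLowerCorner (hnolow _) hy hxy hy')

lemma mem_of_mem_succ_col (hY : StdLadder m n Y) {y a x : ℕ} (ha : (a, y + 1) ∈ Y)
    (hx : (x, y + 1) ∈ Y) (hxy : (x, y) ∈ Y) (hax : a ≤ x) : (a, y) ∈ Y := by
  induction x, hax using Nat.le_induction with
  | base => exact hxy
  | succ x hax ih =>
    have hx' : (x, y + 1) ∈ Y := hY.mem_of_mem_col ha hx hax (by omega)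
    exact ih hx' (mem_of_not_isLowerCorner (hnolow _) hx hx' hxy)

lemma inf_mem_of_adjStep (hY : StdLadder m n Y) {p q q' : ℕ × ℕ} (hpq : p ⊓ q ∈ Y)
    (hq : q ∈ Y) (hq' : q' ∈ Y) (hadj : AdjStep q q') : p ⊓ q' ∈ Y := by
  -- steps increasing a coordinate use the ladder property, steps decreasing one use the
  -- absence of lower inside corners
  obtain ⟨a, b⟩ := p
  obtain ⟨x, y⟩ := q
  obtain ⟨x', y'⟩ := q'
  simp only [AdjStep] at hadj
  simp only [Prod.mk_inf_mk] at hpq ⊢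
  rcases hadj with ⟨rfl, rfl | rfl⟩ | ⟨rfl, rfl | rfl⟩
  · rcases le_or_gt b y with hby | hby
    · rwa [min_eq_left (by omega : b ≤ y + 1), ← min_eq_left hby]
    · rw [min_eq_right hby.le] at hpq
      rw [min_eq_right (by omega : y + 1 ≤ b)]
      exact (hY.1.2 _ _ _ _ hpq hq' (min_le_right a x) (by omega)).1
  · rcases le_or_gt b y' with hby | hby
    · rwa [min_eq_left hby, ← min_eq_left (by omega : b ≤ y' + 1)]
    · rw [min_eq_right (by omega : y' + 1 ≤ b)] at hpq
      rw [min_eq_right hby.le]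
      exact hY.mem_of_mem_succ_col hnolow hpq hq hq' (min_le_right a x)
  · rcases le_or_gt a x with hax | hax
    · rwa [min_eq_left (by omega : a ≤ x + 1), ← min_eq_left hax]
    · rw [min_eq_right hax.le] at hpq
      rw [min_eq_right (by omega : x + 1 ≤ a)]
      exact (hY.1.2 _ _ _ _ hpq hq' (by omega) (min_le_right b y)).2
  · rcases le_or_gt a x' with hax | hax
    · rwa [min_eq_left hax, ← min_eq_left (by omega : a ≤ x' + 1)]
    · rw [min_eq_right (by omega : x' + 1 ≤ a)] at hpq
      rw [min_eq_right hax.le]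
      exact hY.mem_of_mem_succ_row hnolow hpq hq hq' (min_le_right b y)

lemma inf_mem (hY : StdLadder m n Y) (hpath : PathConnected Y) {p q : ℕ × ℕ} (hp : p ∈ Y)
    (hq : q ∈ Y) : p ⊓ q ∈ Y := by
  obtain ⟨-, -, hpq⟩ := hpath p hp q hq
  induction hpq with
  | refl => rwa [inf_idem]
  | tail _ hstep ih => exact hY.inf_mem_of_adjStep hnolow (ih hstep.1) hstep.1 hstep.2.1 hstep.2.2

lemma isStaircase (hY : StdLadder m n Y) (hpath : PathConnected Y) : IsStaircase Y := by
  rintro ⟨i, j⟩ hij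
  obtain ⟨hi, him, hj, hjn⟩ := hY.1.1 _ hij
  refine ⟨Prod.mk_le_mk.2 ⟨hi, hj⟩, ?_⟩
  rintro ⟨i', j'⟩ ⟨⟨hi', hj'⟩, hii', hjj'⟩
  have h1j : (1, j) ∈ Y := by
    simpa [min_eq_left hi, min_eq_right hjn] using hY.inf_mem hnolow hpath hY.2.1 hij
  have hi1 : (i, 1) ∈ Y := by
    simpa [min_eq_right him, min_eq_left hj] using hY.inf_mem hnolow hpath hY.2.2.1 hij
  have hi'j : (i', j) ∈ Y := hY.mem_of_mem_col h1j hij hi' hii'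
  have hij' : (i, j') ∈ Y := hY.mem_of_mem_row hi1 hij hj' hjj'
  simpa [min_eq_left hii', min_eq_right hjj'] using hY.inf_mem hnolow hpath hi'j hij'

end StdLadder

lemma succ_le_apply_last_of_strictMono {k : ℕ} {r : Fin (k + 1) → ℕ} (hr : StrictMono r)
    (h0 : 1 ≤ r 0) : k + 1 ≤ r (Fin.last k) := by
  have := Finset.card_le_card (s := Finset.univ.map ⟨r, hr.injective⟩)
    (t := Finset.Icc 1 (r (Fin.last k))) (by
      rintro _ hx
      obtain ⟨u, -, rfl⟩ := Finset.mem_map.1 hx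
      exact Finset.mem_Icc.2 ⟨h0.trans (hr.monotone (Fin.zero_le u)),
        hr.monotone (Fin.le_last u)⟩)
  simpa using this

namespace IsMinor

variable {t : ℕ} {S M : Set (ℕ × ℕ)}

lemma subset (hM : IsMinor t S M) : M ⊆ S := by
  obtain ⟨r, c, -, -, hrc, rfl⟩ := hM
  rintro _ ⟨u, v, rfl⟩
  exact hrc u v

lemma mono {T : Set (ℕ × ℕ)} (hM : IsMinor t S M) (hST : S ⊆ T) : IsMinor t T M := by
  obtain ⟨r, c, hr, hc, hrc, rfl⟩ := hM
  exact ⟨r, c, hr, hc, fun u v => hST (hrc u v), rfl⟩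

lemma nonempty (hM : IsMinor t S M) (ht : 0 < t) : M.Nonempty := by
  obtain ⟨r, c, -, -, -, rfl⟩ := hM
  exact ⟨_, ⟨⟨0, ht⟩, ⟨0, ht⟩, rfl⟩⟩

lemma exists_le (hM : IsMinor t S M) (hS : ∀ p ∈ S, (1, 1) ≤ p) (ht : 0 < t) :
    ∃ q ∈ S, (t, t) ≤ q ∧ M ⊆ Set.Iic q := by
  obtain ⟨k, rfl⟩ := Nat.exists_eq_add_of_lt ht
  obtain ⟨r, c, hr, hc, hrc, rfl⟩ := hM
  have h0 := hS _ (hrc 0 0)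
  refine ⟨(r (Fin.last _), c (Fin.last _)), hrc _ _, ⟨?_, ?_⟩, ?_⟩
  · simpa using succ_le_apply_last_of_strictMono hr h0.1
  · simpa using succ_le_apply_last_of_strictMono hc h0.2
  · rintro _ ⟨u, v, rfl⟩
    exact ⟨hr.monotone (Fin.le_last u), hc.monotone (Fin.le_last v)⟩

lemma not_exists_isMinor_sdiff {Y' : Set (ℕ × ℕ)} (ht : 0 < t)
    (hmin : ∀ M, IsMinor t S M → M ⊆ Y') : ¬ ∃ M, IsMinor t (S \ Y') M := by
  rintro ⟨M, hM⟩
  obtain ⟨p, hp⟩ := hM.nonempty ht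
  exact (hM.subset hp).2 (hmin M (hM.mono Set.sdiff_subset) hp)

end IsMinor

lemma IsLadder.inter_Iic {m n : ℕ} {S : Set (ℕ × ℕ)} (hS : IsLadder m n S) (r : ℕ × ℕ) :
    IsLadder m n (S ∩ Set.Iic r) :=
  ⟨fun p hp => hS.1 p hp.1, fun i j p q h1 h2 hip hjq =>
    ⟨⟨(hS.2 i j p q h1.1 h2.1 hip hjq).1, h1.2.1, h2.2.2⟩,
      ⟨(hS.2 i j p q h1.1 h2.1 hip hjq).2, h2.2.1, h1.2.2⟩⟩⟩

lemma tConnected_of_adjStep {m n t : ℕ} {S : Set (ℕ × ℕ)} (hS : PathConnected S)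
    (hadj : ∀ p ∈ S, ∀ q ∈ S, AdjStep p q → ∃ M, IsMinor t S M ∧ p ∈ M ∧ q ∈ M) :
    TConnected m n t S := by
  rintro ⟨Z₁, Z₂, ⟨z₁, hz₁⟩, ⟨z₂, hz₂⟩, -, -, hdisj, rfl, hsplit⟩
  have hZ₁ : ∀ q, Relation.ReflTransGen (fun a b => a ∈ Z₁ ∪ Z₂ ∧ b ∈ Z₁ ∪ Z₂ ∧ AdjStep a b)
      z₁ q → q ∈ Z₁ := by
    intro q hq
    induction hq with
    | refl => exact hz₁
    | tail _ hstep ih =>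
      obtain ⟨M, hM, ha, hb⟩ := hadj _ hstep.1 _ hstep.2.1 hstep.2.2
      rcases hsplit M hM with h | h
      · exact h hb
      · exact (Set.eq_empty_iff_forall_notMem.1 hdisj _ ⟨ih, h ha⟩).elim
  obtain ⟨-, -, hpath⟩ := hS z₁ (Or.inl hz₁) z₂ (Or.inr hz₂)
  exact Set.eq_empty_iff_forall_notMem.1 hdisj z₂ ⟨hZ₁ z₂ hpath, hz₂⟩

namespace IsStaircase

variable {Y : Set (ℕ × ℕ)}

lemma le_or_le_of_corners {m n κ : ℕ} {c d : Fin (κ + 2) → ℕ}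
    (hY : IsStaircase Y) (hgrid : ∀ p ∈ Y, InGrid m n p) (hd0 : d 0 = n)
    (hclast : c (Fin.last (κ + 1)) = m)
    (hcorners : ∀ j : Fin (κ + 2), 0 < (j : ℕ) → (j : ℕ) < κ + 1 → IsUpperCorner Y (c j, d j))
    {p : ℕ × ℕ} (hp : p ∈ Y) (j : Fin (κ + 2)) : p.1 ≤ c j ∨ p.2 ≤ d j := by
  rcases Nat.eq_zero_or_pos (j : ℕ) with h0 | h0
  · obtain rfl : j = 0 := Fin.ext h0
    exact Or.inr (hd0 ▸ (hgrid p hp).2.2.2)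
  rcases lt_or_eq_of_le (Nat.lt_succ_iff.1 j.isLt) with hlast | hlast
  · exact hY.le_or_le_of_isUpperCorner (hcorners j h0 hlast) hp
  · obtain rfl : j = Fin.last (κ + 1) := Fin.ext hlast
    exact Or.inl (hclast ▸ (hgrid p hp).2.1)

lemma le_of_corners {m n κ t : ℕ} {c d : Fin (κ + 2) → ℕ}
    (hY : IsStaircase Y) (hgrid : ∀ p ∈ Y, InGrid m n p) (hd0 : d 0 = n)
    (hclast : c (Fin.last (κ + 1)) = m)
    (hcorners : ∀ j : Fin (κ + 2), 0 < (j : ℕ) → (j : ℕ) < κ + 1 → IsUpperCorner Y (c j, d j))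
    {j₁ j₂ : Fin (κ + 2)} (hj₁ : c j₁ < t) (hj₂ : d j₂ < t) {q : ℕ × ℕ} (hq : q ∈ Y)
    (htq : (t, t) ≤ q) : q ≤ (c j₂, d j₁) :=
  have hshape := hY.le_or_le_of_corners hgrid hd0 hclast hcorners hq
  ⟨(hshape j₂).resolve_right (by have : t ≤ q.2 := htq.2; omega),
    (hshape j₁).resolve_left (by have : t ≤ q.1 := htq.1; omega)⟩

section Truncation

variable {a b t : ℕ} (hY : IsStaircase Y) (ha : (a, 1) ∈ Y) (hb : (1, b) ∈ Y)
  (hab : (t, t) ≤ (a, b)) (hcorner : ∀ e, IsUpperCorner Y e → a ≤ e.1 ∨ b ≤ e.2 ∨ (t, t) ≤ e)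
include hY ha hb hab hcorner

lemma sup_mem_inter_Iic {r : ℕ × ℕ} (hr : r ∈ Y ∩ Set.Iic (a, b)) :
    r ⊔ (t, t) ∈ Y ∩ Set.Iic (a, b) := by
  have hle : r ⊔ (t, t) ≤ (a, b) := sup_le hr.2 hab
  refine ⟨?_, hle⟩
  by_contra hs
  obtain ⟨e, he, he1, he2⟩ := hY.exists_isUpperCorner
    (hY.mem_of_le hb le_rfl ((hY.one_le_snd hr.1).trans le_sup_left) le_rfl hle.2)
    (hY.mem_of_le ha ((hY.one_le_fst hr.1).trans le_sup_left) le_rfl hle.1 le_rfl) hs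
  have := hY.le_or_le_of_isUpperCorner he hr.1
  simp only [Prod.le_def, Prod.fst_sup, Prod.snd_sup] at he1 he2 hle
  rcases hcorner e he with h | h | h
  · exact absurd hle.1 (by omega)
  · exact absurd hle.2 (by omega)
  · have : t ≤ e.1 ∧ t ≤ e.2 := h
    omega

lemma tConnected_inter_Iic {m n : ℕ} (ht : 2 ≤ t) : TConnected m n t (Y ∩ Set.Iic (a, b)) := by
  refine tConnected_of_adjStep (hY.inter_Iic _).pathConnected fun p hp q hq hpq => ?_
  have hsup : p ⊔ q ∈ Y ∩ Set.Iic (a, b) := by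
    rcases hpq.le_or_le with h | h
    · rwa [sup_eq_right.2 h]
    · rwa [sup_eq_left.2 h]
  obtain ⟨M, hM, hsq⟩ := (hY.inter_Iic _).exists_isMinor_superset_Icc
    (hY.sup_mem_inter_Iic ha hb hab hcorner hsup) le_sup_right
  refine ⟨M, hM, hsq ⟨?_, le_sup_left.trans le_sup_left⟩, hsq ⟨?_, le_sup_right.trans le_sup_left⟩⟩
  all_goals
    have := hY.one_le_fst hp.1
    have := hY.one_le_snd hp.1
    have := hY.one_le_fst hq.1
    have := hY.one_le_snd hq.1
    simp only [AdjStep] at hpq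
    simp only [Prod.le_def, Prod.fst_sup, Prod.snd_sup]
    omega

end Truncation

end IsStaircase
lemma le_or_le_or_le_of_threshold {ι : Type*} [Preorder ι] {c d : ι → ℕ} (hc : Monotone c)
    (hd : Antitone d) {t : ℕ} {j₁ j₂ : ι} (hj₁ : ∀ j, c j < t → j ≤ j₁)
    (hj₂ : ∀ j, d j < t → j₂ ≤ j) (j : ι) : c j₂ ≤ c j ∨ d j₁ ≤ d j ∨ (t, t) ≤ (c j, d j) := by
  by_cases h₁ : c j < t
  · exact Or.inr (Or.inl (hd (hj₁ j h₁)))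
  by_cases h₂ : d j < t
  · exact Or.inl (hc (hj₂ j h₂))
  exact Or.inr (Or.inr ⟨not_lt.1 h₁, not_lt.1 h₂⟩)

section Splitting

open MvPolynomial

variable (K : Type) [Field K] (t : ℕ) {Y Y' : Set (ℕ × ℕ)}

noncomputable def ladderRingEquiv (hsub : Y' ⊆ Y) (hmin : ∀ M, IsMinor t Y M → M ⊆ Y') :
    LadderRing K t Y ≃ₐ[K] MvPolynomial ↥(Y \ Y') (LadderRing K t Y') := by
  classical
  let e : ↥Y ≃ ↥(Y \ Y') ⊕ ↥Y' :=
    (Equiv.setCongr (Set.sdiff_union_of_subset hsub).symm).trans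
      (Equiv.Set.union Set.disjoint_sdiff_left)
  let Φ : MvPolynomial Y K ≃ₐ[K] MvPolynomial ↥(Y \ Y') (MvPolynomial Y' K) :=
    (renameEquiv K e).trans (sumAlgEquiv K _ _)
  have hX : ∀ (p : ℕ × ℕ) (hp : p ∈ Y'), Φ (X ⟨p, hsub hp⟩) = C (X ⟨p, hp⟩) := by
    intro p hp
    have he : e ⟨p, hsub hp⟩ = Sum.inr ⟨p, hp⟩ := by
      simp only [e, Equiv.trans_apply, Equiv.setCongr_apply]
      exact Equiv.Set.union_apply_right Set.disjoint_sdiff_left hp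
    simp only [Φ, AlgEquiv.trans_apply, renameEquiv_apply, rename_X, he, sumAlgEquiv_X_inr]
  have hminor : ∀ (r c : Fin t → ℕ) (h : ∀ u v, (r u, c v) ∈ Y'),
      Φ (minorPoly K r c fun u v => hsub (h u v)) = C (minorPoly K r c h) := by
    intro r c h
    change (Φ : MvPolynomial Y K →+* MvPolynomial ↥(Y \ Y') (MvPolynomial Y' K)) (Matrix.det _) =
      (C : MvPolynomial Y' K →+* MvPolynomial ↥(Y \ Y') (MvPolynomial Y' K)) (Matrix.det _)
    rw [RingHom.map_det, RingHom.map_det]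
    congr 1
    exact Matrix.ext fun u v => hX _ _
  have hideal : Ideal.map (C : MvPolynomial Y' K →+* MvPolynomial ↥(Y \ Y') (MvPolynomial Y' K))
      (minorIdeal K t Y') =
      Ideal.map (Φ : MvPolynomial Y K →+* MvPolynomial ↥(Y \ Y') (MvPolynomial Y' K))
        (minorIdeal K t Y) := by
    simp only [minorIdeal, Ideal.map_span]
    congr 1
    ext f
    constructor
    · rintro ⟨g, ⟨r, c, hr, hc, h, rfl⟩, rfl⟩
      exact ⟨_, ⟨r, c, hr, hc, _, rfl⟩, hminor r c h⟩
    · rintro ⟨g, ⟨r, c, hr, hc, h, rfl⟩, rfl⟩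
      have h' : ∀ u v, (r u, c v) ∈ Y' := fun u v => hmin _ ⟨r, c, hr, hc, h, rfl⟩ ⟨u, v, rfl⟩
      exact ⟨_, ⟨r, c, hr, hc, h', rfl⟩, (hminor r c h').symm⟩
  exact (Ideal.quotientEquivAlg _ _ Φ hideal).trans
    ((quotientEquivQuotientMvPolynomial (minorIdeal K t Y')).restrictScalars K).symm

end Splitting

theorem oneSided_splitting_general (m n κ t : ℕ) (ht : 2 ≤ t) (K : Type) [Field K]
    (Y : Set (ℕ × ℕ)) (hY : StdLadder m n Y)
    (hpath : PathConnected Y) (hnolow : ∀ p, ¬ IsLowerCorner Y p)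
    (c d : Fin (κ + 2) → ℕ)
    (hd0 : d 0 = n)
    (hclast : c (Fin.last (κ + 1)) = m)
    (hcmono : StrictMono c) (hdanti : StrictAnti d)
    (hcorners : ∀ p : ℕ × ℕ, IsUpperCorner Y p ↔
      ∃ j : Fin (κ + 2), 0 < (j : ℕ) ∧ (j : ℕ) < κ + 1 ∧ p = (c j, d j))
    (hminor : ∃ M, IsMinor t Y M)
    (j₁ j₂ : Fin (κ + 2))
    (hj₁ : c j₁ < t ∧ ∀ j, c j < t → j ≤ j₁)
    (hj₂ : d j₂ < t ∧ ∀ j, d j < t → j₂ ≤ j)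
    (Y' Z : Set (ℕ × ℕ))
    (hY' : Y' = {p ∈ Y | p.1 ≤ c j₂ ∧ p.2 ≤ d j₁})
    (hZ : Z = Y \ Y') :
    j₁ < j₂ ∧
    IsLadder m n Y' ∧ OneSided Y' ∧ TConnected m n t Y' ∧
    (¬ ∃ M, IsMinor t Z M) ∧
    Nonempty (LadderRing K t Y ≃ₐ[K] MvPolynomial Z (LadderRing K t Y')) := by
  have hS : IsStaircase Y := hY.isStaircase hnolow hpath
  have hbound : ∀ q ∈ Y, (t, t) ≤ q → q ≤ (c j₂, d j₁) := fun q hq =>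
    hS.le_of_corners hY.1.1 hd0 hclast (fun j h0 h1 => (hcorners _).2 ⟨j, h0, h1, rfl⟩)
      hj₁.1 hj₂.1 hq
  have hmin : ∀ M, IsMinor t Y M → M ⊆ Y ∩ Set.Iic (c j₂, d j₁) := fun M hM => by
    obtain ⟨q, hq, htq, hMq⟩ := hM.exists_le (fun p hp => (hS p hp).1) (by omega)
    exact fun p hp => ⟨hM.subset hp, (hMq hp).trans (hbound q hq htq)⟩
  obtain ⟨q, hq, htq, -⟩ := hminor.choose_spec.exists_le (fun p hp => (hS p hp).1) (by omega)
  have htc : (t, t) ≤ (c j₂, d j₁) := htq.trans (hbound q hq htq)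
  have hcorner : ∀ e, IsUpperCorner Y e → c j₂ ≤ e.1 ∨ d j₁ ≤ e.2 ∨ (t, t) ≤ e := fun e he => by
    obtain ⟨j, -, -, rfl⟩ := (hcorners e).1 he
    exact le_or_le_or_le_of_threshold hcmono.monotone hdanti.antitone hj₁.2 hj₂.2 j
  have hm1 : (c j₂, 1) ∈ Y := hS.mem_of_le hY.2.2.1 (by have := htc.1; omega) le_rfl
    (hclast ▸ hcmono.monotone (Fin.le_last j₂)) le_rfl
  have h1n : (1, d j₁) ∈ Y := hS.mem_of_le hY.2.1 le_rfl (by have := htc.2; omega) le_rfl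
    (hd0 ▸ hdanti.antitone (Fin.zero_le j₁))
  obtain rfl : Y' = Y ∩ Set.Iic (c j₂, d j₁) := hY'
  subst hZ
  refine ⟨?_, hY.1.inter_Iic _, ⟨(hS.inter_Iic _).pathConnected,
    Or.inl (hS.inter_Iic _).not_isLowerCorner⟩, hS.tConnected_inter_Iic hm1 h1n htc hcorner ht,
    IsMinor.not_exists_isMinor_sdiff (by omega) hmin,
    ⟨ladderRingEquiv K t Set.inter_subset_left hmin⟩⟩
  by_contra! h
  have : t ≤ c j₁ := htc.1.trans (hcmono.monotone h)
  omega

/-- Let `t ≥ 2` and let `Y` be a one-sided ladder with no lower inside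
corners and upper inside corners `(c_1,d_1), …, (c_κ,d_κ)` (with the conventions
`(c_0,d_0) = (1,n)` and `(c_{κ+1},d_{κ+1}) = (m,1)`), containing at least one `t × t`
minor. Let `j₁ = max {j : c_j < t}` and `j₂ = min {j : d_j < t}`. Then `j₁ < j₂`; the
set `Y' = {(i,j) ∈ Y : i ≤ c_{j₂}, j ≤ d_{j₁}}` is a one-sided `t`-connected ladder;
`Z = Y \ Y'` contains no `t × t` minor; and `R_t(Y)` is isomorphic as a `K`-algebra to
the polynomial ring over `R_t(Y')` in the variables indexed by `Z`. -/
theorem oneSided_splitting (m n κ t : ℕ) (ht : 2 ≤ t) (K : Type) [Field K]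
    (Y : Set (ℕ × ℕ)) (hY : StdLadder m n Y)
    (hpath : PathConnected Y) (hnolow : ∀ p, ¬ IsLowerCorner Y p)
    (c d : Fin (κ + 2) → ℕ)
    (hc0 : c 0 = 1) (hd0 : d 0 = n)
    (hclast : c (Fin.last (κ + 1)) = m) (hdlast : d (Fin.last (κ + 1)) = 1)
    (hcmono : StrictMono c) (hdanti : StrictAnti d)
    (hcorners : ∀ p : ℕ × ℕ, IsUpperCorner Y p ↔
      ∃ j : Fin (κ + 2), 0 < (j : ℕ) ∧ (j : ℕ) < κ + 1 ∧ p = (c j, d j))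
    (hminor : ∃ M, IsMinor t Y M)
    (j₁ j₂ : Fin (κ + 2))
    (hj₁ : c j₁ < t ∧ ∀ j, c j < t → j ≤ j₁)
    (hj₂ : d j₂ < t ∧ ∀ j, d j < t → j₂ ≤ j)
    (Y' Z : Set (ℕ × ℕ))
    (hY' : Y' = {p ∈ Y | p.1 ≤ c j₂ ∧ p.2 ≤ d j₁})
    (hZ : Z = Y \ Y') :
    j₁ < j₂ ∧
    IsLadder m n Y' ∧ OneSided Y' ∧ TConnected m n t Y' ∧
    (¬ ∃ M, IsMinor t Z M) ∧
    Nonempty (LadderRing K t Y ≃ₐ[K] MvPolynomial Z (LadderRing K t Y')) :=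
  oneSided_splitting_general m n κ t ht K Y hY hpath hnolow c d hd0 hclast hcmono hdanti hcorners
    hminor j₁ j₂ hj₁ hj₂ Y' Z hY' hZ

end LadderDet
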